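/- There exists S such that for all integers s ≥ S, setting n = 3s, for every integer k with 0 < k < s one has f_{n,2k−1} + 2·f_{n,2k} + ∑_{i=2k+1}^{⌊(n+k)/2⌋} f_{n,i} − f_{n,n−k} < 0, where ⌊·⌋ denotes the integer part. -/

import Mathlib

/-!
The inequality follows from a growth bound on the trinomial coefficients: for `n ≥ 900` and
`3i ≤ 2n` one has `f_{n,i+1} ≥ (5/3) f_{n,i}`. It comes from the three-term recurrence obtained
by comparing coefficients in `P · (Pⁿ)' = n P' Pⁿ` for `P = 1 + X + X²`, applied twice to pass from
`i` to `i + 2`. With this ratio the left-hand side is dominated by a geometric series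
ending at `m = ⌊(n + k)/2⌋`, so it is at most `2.6 f_{n,m}`, while
`f_{n,n-k} ≥ f_{n,m+2} ≥ (25/9) f_{n,m}` by unimodality.
-/

/-- `f_{n,i}`: the coefficient of `x^i` in `(1 + x + x²)^n`. -/
noncomputable def coeff3 (n i : ℕ) : ℕ :=
  (((1 + Polynomial.X + Polynomial.X ^ 2 : Polynomial ℕ)) ^ n).coeff i

open Polynomial Finset

lemma sub_mul_sum_Icc_add_mul_le {R : Type*} [CommRing R] [LinearOrder R] [IsStrictOrderedRing R]
    (g : ℕ → R) {p r : R} {a b : ℕ} (hab : a ≤ b)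
    (hg : ∀ i ∈ Ico a b, p * g i ≤ r * g (i + 1)) :
    (p - r) * ∑ i ∈ Icc a b, g i + r * g a ≤ p * g b := by
  induction b, hab using Nat.le_induction with
  | base => simp [sub_mul]
  | succ b hab ih =>
    rw [← Ico_add_one_right_eq_Icc, sum_Ico_succ_top (by omega), Ico_add_one_right_eq_Icc]
    have hb := hg b (by simp [hab])
    have := ih fun i hi ↦ hg i (by rw [mem_Ico] at hi ⊢; omega)
    linarith

lemma reflect_two_one_add_X_add_X_sq {R : Type*} [Semiring R] :
    reflect 2 (1 + X + X ^ 2 : R[X]) = 1 + X + X ^ 2 := by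
  ext (_ | _ | _ | i) <;> simp [coeff_reflect, revAt_le, revAt_eq_self_of_lt, coeff_one, coeff_X]

lemma reflect_pow_one_add_X_add_X_sq {R : Type*} [Semiring R] (n : ℕ) :
    reflect (2 * n) ((1 + X + X ^ 2 : R[X]) ^ n) = (1 + X + X ^ 2) ^ n := by
  induction n with
  | zero => simp
  | succ n ih =>
    have hdeg : natDegree (1 + X + X ^ 2 : R[X]) ≤ 2 := by compute_degree
    rw [show 2 * (n + 1) = n * 2 + 2 by ring, pow_succ,
      reflect_mul _ _ (natDegree_pow_le_of_le n hdeg) hdeg, mul_comm n, ih,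
      reflect_two_one_add_X_add_X_sq]

lemma mul_derivative_pow_one_add_X_add_X_sq {R : Type*} [CommSemiring R] (n : ℕ) :
    (1 + X + X ^ 2 : R[X]) * derivative ((1 + X + X ^ 2) ^ n)
      = C (n : R) * ((1 + 2 * X) * (1 + X + X ^ 2) ^ n) := by
  have h : derivative (1 + X + X ^ 2 : R[X]) = 1 + 2 * X := by simp [one_add_one_eq_two, C_ofNat]
  cases n with
  | zero => simp
  | succ m =>
    rw [derivative_pow, h, Nat.add_sub_cancel]
    push_cast
    ring

lemma coeff3_symm (n i : ℕ) (h : i ≤ 2 * n) : coeff3 n i = coeff3 n (2 * n - i) := by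
  rw [coeff3, ← reflect_pow_one_add_X_add_X_sq, coeff_reflect, revAt_le h, coeff3]

lemma coeff3_zero (n : ℕ) : coeff3 n 0 = 1 := by
  simp [coeff3, coeff_zero_eq_eval_zero]

lemma coeff3_succ_one (n : ℕ) : coeff3 (n + 1) 1 = coeff3 n 1 + coeff3 n 0 := by
  rw [coeff3, pow_succ, mul_add, mul_add, mul_one, coeff_add, coeff_add, coeff_mul_X,
    coeff_mul_X_pow', if_neg (by omega), add_zero]
  rfl

lemma coeff3_succ_add_two (n j : ℕ) :
    coeff3 (n + 1) (j + 2) = coeff3 n (j + 2) + coeff3 n (j + 1) + coeff3 n j := by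
  rw [coeff3, pow_succ, mul_add, mul_add, mul_one, coeff_add, coeff_add, coeff_mul_X,
    coeff_mul_X_pow]
  rfl

lemma coeff3_one (n : ℕ) : coeff3 n 1 = n := by
  induction n with
  | zero => simp [coeff3, coeff_one]
  | succ n ih => rw [coeff3_succ_one, ih, coeff3_zero]

lemma coeff3_recurrence (n j : ℕ) :
    (j + 2) * coeff3 n (j + 2) + (j + 1) * coeff3 n (j + 1) + j * coeff3 n j
      = n * (coeff3 n (j + 1) + 2 * coeff3 n j) := by
  have h := congrArg (coeff · (j + 1)) (mul_derivative_pow_one_add_X_add_X_sq (R := ℕ) n)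
  simp only [add_mul, one_mul, mul_assoc, coeff_add, coeff_C_mul, coeff_X_mul, coeff_ofNat_mul,
    coeff_X_pow_mul', coeff_derivative] at h
  rcases j with _ | j <;> simpa [coeff3, mul_comm, add_assoc] using h

lemma coeff3_le_coeff3_succ {n i : ℕ} (h : i < n) : coeff3 n i ≤ coeff3 n (i + 1) := by
  induction n generalizing i with
  | zero => omega
  | succ n ih =>
    match i with
    | 0 => simp [coeff3_zero, coeff3_one]
    | 1 => rw [coeff3_one, coeff3_succ_add_two, zero_add, coeff3_one, coeff3_zero]; omega
    | j + 2 =>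
      -- by the Pascal rule the claim reduces to `f_{n,j} ≤ f_{n,j+3}`
      have key : coeff3 n j ≤ coeff3 n (j + 3) := by
        rcases (by omega : j + 3 ≤ n ∨ j + 2 = n) with hj | rfl
        · exact (ih (by omega)).trans ((ih (by omega)).trans (ih hj))
        · rw [coeff3_symm (j + 2) (j + 3) (by omega), show 2 * (j + 2) - (j + 3) = j + 1 by omega]
          exact ih (by omega)
      rw [coeff3_succ_add_two, show j + 2 + 1 = j + 1 + 2 from rfl, coeff3_succ_add_two]
      simp only [show j + 1 + 2 = j + 3 from rfl, show j + 1 + 1 = j + 2 from rfl]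
      omega

lemma coeff3_monotoneOn (n : ℕ) : MonotoneOn (coeff3 n) (Set.Iic n) :=
  monotoneOn_of_le_succ Set.ordConnected_Iic fun _ _ _ hi ↦ coeff3_le_coeff3_succ hi

-- Nine times the right-hand side is `n (n - 696) + u (50 n - 489) + 49 u² + 675`, `u = 2n - 3j`.
lemma ratio_margin_nonneg {n j : ℤ} (hn : 900 ≤ n) (hj : 3 * j ≤ 2 * n) :
    0 ≤ 3 * (11 * n - 8 * j - 5) * (n - j - 2) + 15 * (2 * n - j - 1) * (j + 2)
      - 5 * (11 * n - 8 * j - 5) * (j + 3) := by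
  nlinarith [mul_nonneg (by linarith : (0 : ℤ) ≤ n) (by linarith : (0 : ℤ) ≤ n - 696),
    mul_nonneg (by linarith : (0 : ℤ) ≤ 2 * n - 3 * j) (by linarith : (0 : ℤ) ≤ 50 * n - 489),
    sq_nonneg (2 * n - 3 * j)]

lemma coeff3_ratio_step {n j : ℕ} (hn : 900 ≤ n) (hj : 3 * j ≤ 2 * n)
    (h : 5 * coeff3 n j ≤ 3 * coeff3 n (j + 1)) :
    5 * coeff3 n (j + 2) ≤ 3 * coeff3 n (j + 3) := by
  have R₁ := coeff3_recurrence n j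
  have R₂ := coeff3_recurrence n (j + 1)
  simp only [show j + 1 + 2 = j + 3 from rfl, show j + 1 + 1 = j + 2 from rfl] at R₂
  zify at *
  set b : ℤ := (coeff3 n (j + 1) : ℤ)
  set c : ℤ := (coeff3 n (j + 2) : ℤ)
  have hK : 0 < 11 * (n : ℤ) - 8 * j - 5 := by omega
  -- `R₁` and `h` bound `c` above by a multiple of `b`; `R₂` then bounds `f_{n,j+3}` below
  have hcb : 5 * (j + 2) * c ≤ (11 * n - 8 * j - 5) * b := by
    nlinarith [mul_le_mul_of_nonneg_left h (by omega : (0 : ℤ) ≤ 2 * n - j)]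
  have hmargin := mul_nonneg (ratio_margin_nonneg (by omega) (by omega : 3 * (j : ℤ) ≤ 2 * n))
    (by positivity : 0 ≤ c)
  have hb := mul_le_mul_of_nonneg_left hcb (by omega : (0 : ℤ) ≤ 3 * (2 * n - j - 1))
  refine le_of_mul_le_mul_left ?_ (mul_pos (by omega : (0 : ℤ) < j + 3) hK)
  nlinarith

lemma coeff3_ratio {n i : ℕ} (hn : 900 ≤ n) (hi : 3 * i ≤ 2 * n) :
    5 * coeff3 n i ≤ 3 * coeff3 n (i + 1) := by
  induction i using Nat.twoStepInduction with
  | zero => rw [coeff3_zero, coeff3_one]; omega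
  | one =>
    have h : 2 * coeff3 n 2 + n = n * (n + 2) := by
      simpa [coeff3_zero, coeff3_one] using coeff3_recurrence n 0
    rw [coeff3_one]
    nlinarith
  | more i ih _ => exact coeff3_ratio_step hn (by omega) (ih (by omega))

/-- For `n = 3s` with `s` large and `0 < k < s`,
`f_{n,2k-1} + 2 f_{n,2k} + ∑_{i=2k+1}^{⌊(n+k)/2⌋} f_{n,i} - f_{n,n-k} < 0`. -/
theorem ineq_three_s :
    ∃ S : ℕ, ∀ s : ℕ, S ≤ s → ∀ k : ℕ, 0 < k → k < s →
      (coeff3 (3 * s) (2 * k - 1) : ℤ) + 2 * (coeff3 (3 * s) (2 * k) : ℤ) +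
          (∑ i ∈ Finset.Icc (2 * k + 1) ((3 * s + k) / 2), (coeff3 (3 * s) i : ℤ)) -
          (coeff3 (3 * s) (3 * s - k) : ℤ) < 0 := by
  refine ⟨300, fun s hs k hk hks => ?_⟩
  set m := (3 * s + k) / 2
  have ratio (i : ℕ) (hi : 3 * i ≤ 2 * (3 * s)) :
      (5 : ℤ) * coeff3 (3 * s) i ≤ 3 * coeff3 (3 * s) (i + 1) := by
    exact_mod_cast coeff3_ratio (by omega) hi
  have mono {i j : ℕ} (hij : i ≤ j) (hj : j ≤ 3 * s) :
      (coeff3 (3 * s) i : ℤ) ≤ coeff3 (3 * s) j := by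
    exact_mod_cast coeff3_monotoneOn (3 * s) (Set.mem_Iic.2 (by omega)) hj hij
  have hsum := sub_mul_sum_Icc_add_mul_le (fun i ↦ (coeff3 (3 * s) i : ℤ)) (by omega : 2 * k ≤ m)
    fun i hi ↦ ratio i (by rw [mem_Ico] at hi; omega)
  rw [← add_sum_Ioc_eq_sum_Icc (by omega), ← Icc_add_one_left_eq_Ioc] at hsum
  have h₁ := ratio (2 * k - 1) (by omega)
  rw [Nat.sub_add_cancel (by omega)] at h₁
  have h₂ := ratio m (by omega)
  have h₃ : (5 : ℤ) * coeff3 (3 * s) (m + 1) ≤ 3 * coeff3 (3 * s) (m + 2) :=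
    ratio (m + 1) (by omega)
  have h₄ := mono (by omega : 2 * k ≤ m) (by omega)
  have h₅ := mono (by omega : m + 2 ≤ 3 * s - k) (by omega)
  have hpos : (1 : ℤ) ≤ coeff3 (3 * s) m := by
    simpa [coeff3_zero] using mono (Nat.zero_le m) (by omega)
  linarith
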